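/- For all positive integers k and all integers d, the integer k divides ∑_{m | k} μ(m) · d^{k/m}, where μ is the Möbius function and the sum runs over positive divisors m of k. (This divisibility underlies Witt's dimension formula dim L^k = (1/k) ∑_{m|k} μ(m) d^{k/m} for the homogeneous components of a free Lie algebra on d generators.) -/

import Mathlib

/-!
Divisibility by `k` is checked one prime power `p ^ (α + 1) ∥ k` at a time. Writing
`k = p ^ (α + 1) * n` with `p ∤ n`, the divisors of `k` are the products `a * b` with
`a ∣ p ^ (α + 1)` and `b ∣ n`, and `μ (a * b) = μ a * μ b` vanishes unless `a ∈ {1, p}`. The sum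
therefore collapses to `∑_{b ∣ n} μ b * (d ^ (p ^ (α + 1) * t) - d ^ (p ^ α * t))` with `t = n / b`,
and each bracket is divisible by `p ^ (α + 1)`: Fermat gives `p ∣ e ^ p - e` for `e = d ^ t`, and
raising to the power `p ^ α` gains one factor of `p` per step.
-/

open Finset ArithmeticFunction
open scoped ArithmeticFunction.Moebius

theorem Nat.Coprime.sum_divisors_mul_eq_sum_sum {M : Type*} [AddCommMonoid M] {m n : ℕ}
    (hmn : m.Coprime n) (f : ℕ → M) :
    ∑ d ∈ (m * n).divisors, f d = ∑ a ∈ m.divisors, ∑ b ∈ n.divisors, f (a * b) := by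
  rw [hmn.divisors_mul, sum_map]
  exact (sum_attach _ fun x : ℕ × ℕ => f (x.1 * x.2)).trans (sum_product _ _ _)

theorem sum_divisors_prime_pow_succ_moebius_mul {R : Type*} [CommRing R] {p : ℕ} (hp : p.Prime)
    (α : ℕ) (h : ℕ → R) :
    ∑ a ∈ (p ^ (α + 1)).divisors, (μ a : R) * h a = h 1 - h p := by
  have hμ : ∀ i ∈ range α, (μ (p ^ (i + 2)) : R) * h (p ^ (i + 2)) = 0 := fun i _ => by
    rw [moebius_apply_prime_pow hp (by omega)]; simp
  rw [Nat.sum_divisors_prime_pow hp, sum_range_succ', sum_range_succ', sum_eq_zero hμ]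
  simp [moebius_apply_prime hp]
  ring

theorem prime_pow_succ_dvd_pow_sub_pow {p : ℕ} (hp : p.Prime) (α t : ℕ) (d : ℤ) :
    (p : ℤ) ^ (α + 1) ∣ d ^ (p ^ (α + 1) * t) - d ^ (p ^ α * t) := by
  have := dvd_sub_pow_of_dvd_sub (Int.ModEq.pow_prime_eq_self hp (d ^ t)).symm.dvd α
  rwa [← pow_mul, ← pow_mul, ← pow_mul, mul_comm p, ← pow_succ, mul_comm, mul_comm t] at this

theorem sum_divisors_prime_pow_succ_mul_moebius_mul {R : Type*} [CommRing R] {p n : ℕ}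
    (hp : p.Prime) (hpn : p.Coprime n) (α : ℕ) (f : ℕ → R) :
    ∑ m ∈ (p ^ (α + 1) * n).divisors, (μ m : R) * f ((p ^ (α + 1) * n) / m) =
      ∑ b ∈ n.divisors, (μ b : R) * (f (p ^ (α + 1) * (n / b)) - f (p ^ α * (n / b))) := by
  rw [(hpn.pow_left _).sum_divisors_mul_eq_sum_sum, sum_comm]
  refine sum_congr rfl fun b hb => ?_
  have hbn : b ∣ n := Nat.dvd_of_mem_divisors hb
  have hμ : ∀ a ∈ (p ^ (α + 1)).divisors, (μ (a * b) : R) = μ a * μ b := fun a ha => by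
    have hab := ((hpn.pow_left _).coprime_dvd_left (Nat.dvd_of_mem_divisors ha)).coprime_dvd_right
      hbn
    rw [isMultiplicative_moebius.map_mul_of_coprime hab, Int.cast_mul]
  have hdiv_one : p ^ (α + 1) * n / (1 * b) = p ^ (α + 1) * (n / b) := by
    rw [one_mul, Nat.mul_div_assoc _ hbn]
  have hdiv_p : p ^ (α + 1) * n / (p * b) = p ^ α * (n / b) := by
    rw [pow_succ', mul_assoc, Nat.mul_div_mul_left _ _ hp.pos, Nat.mul_div_assoc _ hbn]
  rw [sum_congr rfl fun a ha => by rw [hμ a ha, mul_assoc],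
    sum_divisors_prime_pow_succ_moebius_mul hp, hdiv_one, hdiv_p, mul_sub]

theorem prime_pow_succ_dvd_sum_moebius_mul_pow {p n : ℕ} (hp : p.Prime) (hpn : p.Coprime n)
    (α : ℕ) (d : ℤ) :
    (p : ℤ) ^ (α + 1) ∣
      ∑ m ∈ (p ^ (α + 1) * n).divisors, μ m * d ^ ((p ^ (α + 1) * n) / m) := by
  have hsum := sum_divisors_prime_pow_succ_mul_moebius_mul hp hpn α (d ^ ·)
  simp only [Int.cast_id] at hsum
  rw [hsum]
  exact dvd_sum fun b _ => dvd_mul_of_dvd_right (prime_pow_succ_dvd_pow_sub_pow hp α _ d) _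

theorem ordProj_dvd_sum_moebius_mul_pow {k : ℕ} (hk : k ≠ 0) {p : ℕ} (hp : p.Prime) (d : ℤ) :
    (p : ℤ) ^ k.factorization p ∣ ∑ m ∈ k.divisors, μ m * d ^ (k / m) := by
  obtain ⟨n, hpn, hkn⟩ : ∃ n, p.Coprime n ∧ k = p ^ k.factorization p * n :=
    ⟨_, Nat.coprime_ordCompl hp hk, (Nat.ordProj_mul_ordCompl_eq_self k p).symm⟩
  generalize k.factorization p = α at hkn ⊢
  subst hkn
  cases α with
  | zero => simp
  | succ α => exact prime_pow_succ_dvd_sum_moebius_mul_pow hp hpn α d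

/-- For all positive `k` and all integers `d`,
`k` divides `∑_{m | k} μ(m) · d^(k/m)` where `μ` is the Möbius function. -/
theorem stmt6 (k : ℕ) (hk : 0 < k) (d : ℤ) :
    (k : ℤ) ∣ ∑ m ∈ k.divisors, ArithmeticFunction.moebius m * d ^ (k / m) := by
  rw [Int.natCast_dvd, Nat.dvd_iff_prime_pow_dvd_dvd]
  intro p j hp hpj
  have hj : j ≤ k.factorization p := (hp.pow_dvd_iff_le_factorization hk.ne').mp hpj
  rw [← Int.natCast_dvd, Nat.cast_pow]
  exact (pow_dvd_pow _ hj).trans (ordProj_dvd_sum_moebius_mul_pow hk.ne' hp d)
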